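/- Wave front estimate for p-adic kernels: let u be a distribution on X × Y with kernel 𝒦, and ψ a Schwartz–Bruhat function on Y. Then WF_Λ(𝒦ψ) ⊆ {(x, ξ) ∈ X × (ℚ_p^m \ {0}) : ∃ y ∈ supp ψ with ((x, y), (ξ, 0)) ∈ WF_Λ(u)}. -/

import Mathlib

open Set

noncomputable section

/-- A Schwartz–Bruhat function on an open set `X`: a locally constant, compactly
supported `ℂ`-valued function (extended by zero outside `X`). -/
def IsSB {E : Type*} [TopologicalSpace E] (X : Set E) (φ : E → ℂ) : Prop :=
  IsLocallyConstant φ ∧ HasCompactSupport φ ∧ tsupport φ ⊆ X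

theorem IsSB.zero {E : Type*} [TopologicalSpace E] (X : Set E) : IsSB X (0 : E → ℂ) := by
  refine ⟨IsLocallyConstant.const 0, ?_, ?_⟩ <;>
    simp [HasCompactSupport, tsupport, Function.support_zero]

theorem IsSB.add {E : Type*} [TopologicalSpace E] {X : Set E} {f g : E → ℂ}
    (hf : IsSB X f) (hg : IsSB X g) : IsSB X (f + g) :=
  ⟨hf.1.add hg.1, hf.2.1.add hg.2.1, (tsupport_add f g).trans (union_subset hf.2.2 hg.2.2)⟩

theorem IsSB.smul {E : Type*} [TopologicalSpace E] {X : Set E} {f : E → ℂ} (c : ℂ)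
    (hf : IsSB X f) : IsSB X (c • f) := by
  refine ⟨?_, hf.2.1.smul_left, (tsupport_smul_subset_right (fun _ => c) f).trans hf.2.2⟩
  have := (IsLocallyConstant.const (X := E) c).mul hf.1
  have h : c • f = Function.const E c * f := by funext x; simp [smul_eq_mul]
  rw [h]; exact this

/-- The space `𝒮(X)` of Schwartz–Bruhat functions on `X`, as a `ℂ`-submodule of `E → ℂ`. -/
def SB {E : Type*} [TopologicalSpace E] (X : Set E) : Submodule ℂ (E → ℂ) where
  carrier := {φ | IsSB X φ}
  zero_mem' := IsSB.zero X
  add_mem' := IsSB.add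
  smul_mem' := fun c _ h => IsSB.smul c h

theorem IsSB.tensor {E F : Type*} [TopologicalSpace E] [TopologicalSpace F]
    {X : Set E} {Y : Set F} {φ : E → ℂ} {ψ : F → ℂ}
    (hφ : IsSB X φ) (hψ : IsSB Y ψ) : IsSB (X ×ˢ Y) (fun z : E × F => φ z.1 * ψ z.2) := by
  have hsupp : tsupport (fun z : E × F => φ z.1 * ψ z.2) ⊆ tsupport φ ×ˢ tsupport ψ := by
    rw [tsupport, tsupport, tsupport, ← closure_prod_eq]
    refine closure_mono ?_
    intro z hz
    simp only [Function.mem_support, mul_ne_zero_iff] at hz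
    exact (Set.mem_prod.2 ⟨Function.mem_support.2 hz.1, Function.mem_support.2 hz.2⟩)
  refine ⟨(hφ.1.comp_continuous continuous_fst).mul (hψ.1.comp_continuous continuous_snd),
    IsCompact.of_isClosed_subset (hφ.2.1.prod hψ.2.1) (isClosed_tsupport _) hsupp,
    hsupp.trans (Set.prod_mono hφ.2.2 hψ.2.2)⟩

/-- The bilinear map `(φ, ψ) ↦ φ ⊗ ψ`, `(φ ⊗ ψ)(x, y) = φ(x)ψ(y)`,
from `𝒮(X) × 𝒮(Y)` to `𝒮(X × Y)`. -/
def tensorBilin {E F : Type*} [TopologicalSpace E] [TopologicalSpace F]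
    (X : Set E) (Y : Set F) : SB X →ₗ[ℂ] SB Y →ₗ[ℂ] SB (X ×ˢ Y) :=
  LinearMap.mk₂ ℂ
    (fun φ ψ => ⟨fun z : E × F => (φ : E → ℂ) z.1 * (ψ : F → ℂ) z.2,
      IsSB.tensor (show IsSB X (φ : E → ℂ) from φ.2) (show IsSB Y (ψ : F → ℂ) from ψ.2)⟩)
    (fun φ φ' ψ => Subtype.ext (funext fun z => by
      simp only [Submodule.coe_add, Pi.add_apply]; ring))
    (fun c φ ψ => Subtype.ext (funext fun z => by
      simp only [SetLike.val_smul, Pi.smul_apply, smul_eq_mul]; ring))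
    (fun φ ψ ψ' => Subtype.ext (funext fun z => by
      simp only [Submodule.coe_add, Pi.add_apply]; ring))
    (fun c φ ψ => Subtype.ext (funext fun z => by
      simp only [SetLike.val_smul, Pi.smul_apply, smul_eq_mul]; ring))

/-- Multiplying a Schwartz–Bruhat function by the character `z ↦ Ψ(⟨z, η⟩)`, where `Ψ` is
an additive character trivial on `pℤ_p`, yields a Schwartz–Bruhat function. -/
theorem IsSB.charMul (p : ℕ) [Fact p.Prime] {k : ℕ} {X : Set (Fin k → ℚ_[p])}
    {φ : (Fin k → ℚ_[p]) → ℂ} (hφ : IsSB X φ) {Ψ : ℚ_[p] → ℂ}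
    (hΨadd : ∀ x y : ℚ_[p], Ψ (x + y) = Ψ x * Ψ y)
    (hΨtriv : ∀ x : ℚ_[p], ‖x‖ ≤ (p : ℝ)⁻¹ → Ψ x = 1)
    (η : Fin k → ℚ_[p]) :
    IsSB X (fun z : Fin k → ℚ_[p] => φ z * Ψ (∑ i, z i * η i)) := by
  have hp : (0 : ℝ) < (p : ℝ)⁻¹ := by
    have := (Fact.out : p.Prime).pos
    positivity
  have hΨlc : IsLocallyConstant Ψ := by
    rw [IsLocallyConstant.iff_exists_open]
    intro x
    refine ⟨Metric.closedBall x ((p : ℝ)⁻¹), IsUltrametricDist.isOpen_closedBall x hp.ne',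
      Metric.mem_closedBall_self hp.le, fun y hy => ?_⟩
    have h1 : Ψ (y - x) = 1 := hΨtriv _ (by
      simpa [dist_eq_norm] using (Metric.mem_closedBall.1 hy))
    have := hΨadd x (y - x)
    simpa [h1] using this
  have hcont : Continuous (fun z : Fin k → ℚ_[p] => ∑ i, z i * η i) :=
    continuous_finset_sum _ fun i _ => (continuous_apply i).mul continuous_const
  exact ⟨hφ.1.mul (hΨlc.comp_continuous hcont), hφ.2.1.mul_right,
    tsupport_mul_subset_left.trans hφ.2.2⟩

/-- `Λ`-microlocal smoothness of a distribution `u` on `X ⊆ ℚ_p^k` at `(x₀, ξ₀)`: on some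
open neighborhoods `U ∋ x₀` in `X` and `V ∋ ξ₀` avoiding `0`, for every Schwartz–Bruhat
function supported in `U` there is `N` with `⟨u, φ Ψ(⟨·, λξ⟩)⟩ = 0` for all `λ ∈ Λ` with
`ord λ < N` and all `ξ ∈ V`. -/
def MicrolocallySmooth (p : ℕ) [Fact p.Prime] {k : ℕ} (Λ : Subgroup ℚ_[p]ˣ)
    {Ψ : ℚ_[p] → ℂ} (hΨadd : ∀ x y : ℚ_[p], Ψ (x + y) = Ψ x * Ψ y)
    (hΨtriv : ∀ x : ℚ_[p], ‖x‖ ≤ (p : ℝ)⁻¹ → Ψ x = 1)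
    (X : Set (Fin k → ℚ_[p])) (u : Module.Dual ℂ (SB X))
    (x₀ ξ₀ : Fin k → ℚ_[p]) : Prop :=
  ∃ U V : Set (Fin k → ℚ_[p]),
    IsOpen U ∧ x₀ ∈ U ∧ U ⊆ X ∧ IsOpen V ∧ ξ₀ ∈ V ∧ (0 : Fin k → ℚ_[p]) ∉ V ∧
    ∀ φ : SB X, tsupport (φ : (Fin k → ℚ_[p]) → ℂ) ⊆ U →
      ∃ N : ℤ, ∀ lam : ℚ_[p]ˣ, lam ∈ Λ → ((lam : ℚ_[p])).valuation < N → ∀ ξ ∈ V,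
        u ⟨fun z => (φ : (Fin k → ℚ_[p]) → ℂ) z * Ψ (∑ i, z i * ((lam : ℚ_[p]) * ξ i)),
          IsSB.charMul p (show IsSB X (φ : (Fin k → ℚ_[p]) → ℂ) from φ.2)
            hΨadd hΨtriv _⟩ = 0

/-- The `Λ`-wave front set of a distribution `u` on `X ⊆ ℚ_p^k`. -/
def WF (p : ℕ) [Fact p.Prime] {k : ℕ} (Λ : Subgroup ℚ_[p]ˣ)
    {Ψ : ℚ_[p] → ℂ} (hΨadd : ∀ x y : ℚ_[p], Ψ (x + y) = Ψ x * Ψ y)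
    (hΨtriv : ∀ x : ℚ_[p], ‖x‖ ≤ (p : ℝ)⁻¹ → Ψ x = 1)
    (X : Set (Fin k → ℚ_[p])) (u : Module.Dual ℂ (SB X)) :
    Set ((Fin k → ℚ_[p]) × (Fin k → ℚ_[p])) :=
  {z | z.1 ∈ X ∧ z.2 ≠ 0 ∧ ¬ MicrolocallySmooth p Λ hΨadd hΨtriv X u z.1 z.2}

/-- `X × Y ⊆ ℚ_p^m × ℚ_p^n` viewed inside `ℚ_p^{m+n}`. -/
def prodSet (p : ℕ) [Fact p.Prime] {m n : ℕ} (X : Set (Fin m → ℚ_[p]))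
    (Y : Set (Fin n → ℚ_[p])) : Set (Fin (m + n) → ℚ_[p]) :=
  {z | z ∘ Fin.castAdd n ∈ X ∧ z ∘ Fin.natAdd m ∈ Y}

theorem IsSB.tensorFin (p : ℕ) [Fact p.Prime] {m n : ℕ} {X : Set (Fin m → ℚ_[p])}
    {Y : Set (Fin n → ℚ_[p])} {φ : (Fin m → ℚ_[p]) → ℂ} {ψ : (Fin n → ℚ_[p]) → ℂ}
    (hφ : IsSB X φ) (hψ : IsSB Y ψ) :
    IsSB (prodSet p X Y)
      (fun z : Fin (m + n) → ℚ_[p] => φ (z ∘ Fin.castAdd n) * ψ (z ∘ Fin.natAdd m)) := by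
  have hg := IsSB.tensor hφ hψ
  set g : (Fin m → ℚ_[p]) × (Fin n → ℚ_[p]) → ℂ := fun w => φ w.1 * ψ w.2 with hgdef
  set e := (Fin.appendHomeomorph m n (X := ℚ_[p])).symm with he
  have hfun : (fun z : Fin (m + n) → ℚ_[p] => φ (z ∘ Fin.castAdd n) * ψ (z ∘ Fin.natAdd m))
      = g ∘ e := rfl
  rw [hfun]
  have hsub : tsupport (g ∘ e) ⊆ e ⁻¹' tsupport g := by
    refine closure_minimal ?_ ((isClosed_tsupport g).preimage e.continuous)
    intro z hz
    exact subset_closure (by simpa [Function.support_comp_eq_preimage] using hz)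
  refine ⟨hg.1.comp_continuous e.continuous, hg.2.1.comp_homeomorph e, ?_⟩
  intro z hz
  have := hg.2.2 (hsub hz)
  exact ⟨this.1, this.2⟩

/-- The tensor product `φ ⊗ ψ ∈ 𝒮(X × Y)` of `φ ∈ 𝒮(X)` and `ψ ∈ 𝒮(Y)`, with
`X × Y ⊆ ℚ_p^{m+n}`. -/
def tensorSB (p : ℕ) [Fact p.Prime] {m n : ℕ} {X : Set (Fin m → ℚ_[p])}
    {Y : Set (Fin n → ℚ_[p])} (φ : SB X) (ψ : SB Y) : SB (prodSet p X Y) :=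
  ⟨fun z : Fin (m + n) → ℚ_[p] =>
      (φ : (Fin m → ℚ_[p]) → ℂ) (z ∘ Fin.castAdd n)
        * (ψ : (Fin n → ℚ_[p]) → ℂ) (z ∘ Fin.natAdd m),
    IsSB.tensorFin p (show IsSB X (φ : (Fin m → ℚ_[p]) → ℂ) from φ.2)
      (show IsSB Y (ψ : (Fin n → ℚ_[p]) → ℂ) from ψ.2)⟩

/-!
Suppose every `((x, y), (ξ, 0))` with `y ∈ supp ψ` is microlocally smooth for `u`. Since
`(φ Ψ(⟨·, λξ⟩)) ⊗ θ = (φ ⊗ θ) Ψ(⟨·, λ(ξ, 0)⟩)`, the kernel relation turns this into a local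
statement: around each such `y` there are neighbourhoods `A ∋ x`, `C ∋ ξ` and a clopen `W ∋ y`
such that, for every `θ` supported in `W`, the localizations of `K θ` to `A` have Fourier
transforms vanishing on the `Λ`-cones over `C`, with `A` and `C` independent of `θ`.
Finitely many `W` cover the compact support of `ψ`, and `ψ` splits into pieces supported in
them; intersecting the corresponding `A`'s and `C`'s and taking the least of the finitely many
orders `N` shows that `K ψ` is microlocally smooth at `(x, ξ)`.
-/

section SchwartzBruhat

variable {E : Type*} [TopologicalSpace E] {Y : Set E}

theorem tsupport_indicator_subset_inter {W : Set E} (hW : IsClosed W) (f : E → ℂ) :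
    tsupport (W.indicator f) ⊆ W ∩ tsupport f := by
  rw [tsupport, support_indicator]
  exact (closure_inter_subset_inter_closure _ _).trans (by rw [hW.closure_eq]; rfl)

theorem IsSB.indicator {W : Set E} (hW : IsClopen W) {f : E → ℂ} (hf : IsSB Y f) :
    IsSB Y (W.indicator f) :=
  have hsupp := tsupport_indicator_subset_inter hW.isClosed f
  ⟨(LocallyConstant.indicator ⟨f, hf.1⟩ hW).isLocallyConstant,
    hf.2.1.of_isClosed_subset (isClosed_tsupport _) fun _ hz => (hsupp hz).2,
    fun _ hz => hf.2.2 (hsupp hz).2⟩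

theorem SB.exists_sum_eq_of_tsupport_subset {ι : Type*} (s : Finset ι) {W : ι → Set E}
    (hW : ∀ i ∈ s, IsClopen (W i)) (ψ : SB Y) (hψ : tsupport (ψ : E → ℂ) ⊆ ⋃ i ∈ s, W i) :
    ∃ θ : ι → SB Y, ∑ i ∈ s, θ i = ψ ∧ ∀ i ∈ s, tsupport (θ i : E → ℂ) ⊆ W i := by
  classical
  induction s using Finset.induction_on generalizing ψ with
  | empty =>
    have hψ0 : ψ = 0 := Subtype.ext <| tsupport_eq_empty_iff.1 <| by simpa using hψ
    exact ⟨0, by simp [hψ0], by simp⟩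
  | insert a s ha ih =>
    have hWa := hW a (Finset.mem_insert_self a s)
    let ψa : SB Y := ⟨(W a).indicator ψ, IsSB.indicator hWa ψ.2⟩
    let ψrest : SB Y := ⟨(W a)ᶜ.indicator ψ, IsSB.indicator hWa.compl ψ.2⟩
    have hrest : tsupport (ψrest : E → ℂ) ⊆ ⋃ i ∈ s, W i := by
      intro z hz
      obtain ⟨hza, hzψ⟩ := tsupport_indicator_subset_inter hWa.compl.isClosed ψ hz
      have hz' := hψ hzψ
      rw [Finset.set_biUnion_insert] at hz'
      exact hz'.resolve_left hza
    obtain ⟨θ, hsum, hθ⟩ := ih (fun i hi => hW i (Finset.mem_insert_of_mem hi)) ψrest hrest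
    refine ⟨Function.update θ a ψa, ?_, ?_⟩
    · rw [Finset.sum_insert ha, Function.update_self,
        Finset.sum_congr rfl fun i hi => Function.update_of_ne (ne_of_mem_of_not_mem hi ha) _ _,
        hsum]
      exact Subtype.ext (indicator_self_add_compl (W a) (ψ : E → ℂ))
    · intro i hi
      rcases eq_or_ne i a with rfl | hia
      · rw [Function.update_self]
        exact fun z hz => (tsupport_indicator_subset_inter hWa.isClosed ψ hz).1
      · rw [Function.update_of_ne hia]
        exact hθ i ((Finset.mem_insert.1 hi).resolve_left hia)

end SchwartzBruhat

section Fourier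

variable {p : ℕ} [Fact p.Prime] {Ψ : ℚ_[p] → ℂ} (hΨadd : ∀ x y : ℚ_[p], Ψ (x + y) = Ψ x * Ψ y)
  (hΨtriv : ∀ x : ℚ_[p], ‖x‖ ≤ (p : ℝ)⁻¹ → Ψ x = 1)

def charMulSB {k : ℕ} {X : Set (Fin k → ℚ_[p])} (φ : SB X) (η : Fin k → ℚ_[p]) : SB X :=
  ⟨fun z => (φ : (Fin k → ℚ_[p]) → ℂ) z * Ψ (∑ i, z i * η i),
    IsSB.charMul p (show IsSB X (φ : (Fin k → ℚ_[p]) → ℂ) from φ.2) hΨadd hΨtriv η⟩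

variable (Λ : Subgroup ℚ_[p]ˣ)

/-- `v (φ · Ψ(⟨·, η⟩))` is the Fourier transform of the localization `φ v` at `η` (up to sign
convention); it is asked to vanish on a cone `{λξ : ξ ∈ C, λ ∈ Λ, ord λ < N}` for every `φ`
supported in `A`. -/
def FourierVanishesOn {k : ℕ} {X : Set (Fin k → ℚ_[p])} (v : Module.Dual ℂ (SB X))
    (A C : Set (Fin k → ℚ_[p])) : Prop :=
  ∀ φ : SB X, tsupport (φ : (Fin k → ℚ_[p]) → ℂ) ⊆ A →
    ∃ N : ℤ, ∀ lam : ℚ_[p]ˣ, lam ∈ Λ → (lam : ℚ_[p]).valuation < N → ∀ ξ ∈ C,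
      v (charMulSB hΨadd hΨtriv φ ((lam : ℚ_[p]) • ξ)) = 0

variable {hΨadd hΨtriv Λ} {k : ℕ} {X : Set (Fin k → ℚ_[p])}

theorem microlocallySmooth_iff {u : Module.Dual ℂ (SB X)} {x₀ ξ₀ : Fin k → ℚ_[p]} :
    MicrolocallySmooth p Λ hΨadd hΨtriv X u x₀ ξ₀ ↔
      ∃ U V : Set (Fin k → ℚ_[p]), IsOpen U ∧ x₀ ∈ U ∧ U ⊆ X ∧ IsOpen V ∧ ξ₀ ∈ V ∧
        (0 : Fin k → ℚ_[p]) ∉ V ∧ FourierVanishesOn hΨadd hΨtriv Λ u U V :=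
  Iff.rfl

namespace FourierVanishesOn

variable {v w : Module.Dual ℂ (SB X)} {A C : Set (Fin k → ℚ_[p])}

theorem mono {A' C' : Set (Fin k → ℚ_[p])} (h : FourierVanishesOn hΨadd hΨtriv Λ v A C)
    (hA : A' ⊆ A) (hC : C' ⊆ C) : FourierVanishesOn hΨadd hΨtriv Λ v A' C' := fun φ hφ =>
  (h φ (hφ.trans hA)).imp fun _ hN lam hlam hord ξ hξ => hN lam hlam hord ξ (hC hξ)

theorem zero : FourierVanishesOn hΨadd hΨtriv Λ (0 : Module.Dual ℂ (SB X)) A C :=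
  fun _ _ => ⟨0, fun _ _ _ _ _ => rfl⟩

theorem add (hv : FourierVanishesOn hΨadd hΨtriv Λ v A C)
    (hw : FourierVanishesOn hΨadd hΨtriv Λ w A C) :
    FourierVanishesOn hΨadd hΨtriv Λ (v + w) A C := fun φ hφ => by
  obtain ⟨N, hN⟩ := hv φ hφ
  obtain ⟨N', hN'⟩ := hw φ hφ
  refine ⟨min N N', fun lam hlam hord ξ hξ => ?_⟩
  rw [LinearMap.add_apply, hN lam hlam (hord.trans_le (min_le_left _ _)) ξ hξ,
    hN' lam hlam (hord.trans_le (min_le_right _ _)) ξ hξ, add_zero]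

theorem sum {ι : Type*} (s : Finset ι) {v : ι → Module.Dual ℂ (SB X)}
    (h : ∀ i ∈ s, FourierVanishesOn hΨadd hΨtriv Λ (v i) A C) :
    FourierVanishesOn hΨadd hΨtriv Λ (∑ i ∈ s, v i) A C :=
  Finset.sum_induction v (FourierVanishesOn hΨadd hΨtriv Λ · A C) (fun _ _ => add) zero h

end FourierVanishesOn

end Fourier

section Gluing

variable {p : ℕ} [Fact p.Prime] {Ψ : ℚ_[p] → ℂ} {hΨadd : ∀ x y : ℚ_[p], Ψ (x + y) = Ψ x * Ψ y}
  {hΨtriv : ∀ x : ℚ_[p], ‖x‖ ≤ (p : ℝ)⁻¹ → Ψ x = 1} {Λ : Subgroup ℚ_[p]ˣ}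
  {k : ℕ} {X : Set (Fin k → ℚ_[p])} {F : Type*} [TopologicalSpace F] {Y : Set F}

theorem microlocallySmooth_of_forall_mem_tsupport (hX : IsOpen X)
    (K : SB Y →ₗ[ℂ] Module.Dual ℂ (SB X)) (ψ : SB Y) {x ξ : Fin k → ℚ_[p]} (hx : x ∈ X)
    (hξ : ξ ≠ 0)
    (hloc : ∀ y ∈ tsupport (ψ : F → ℂ), ∃ (A : Set (Fin k → ℚ_[p])) (W : Set F)
      (C : Set (Fin k → ℚ_[p])), IsOpen A ∧ x ∈ A ∧ IsClopen W ∧ y ∈ W ∧ IsOpen C ∧ ξ ∈ C ∧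
        ∀ θ : SB Y, tsupport (θ : F → ℂ) ⊆ W → FourierVanishesOn hΨadd hΨtriv Λ (K θ) A C) :
    MicrolocallySmooth p Λ hΨadd hΨtriv X (K ψ) x ξ := by
  choose A W C hA hxA hW hyW hC hξC hAWC using hloc
  obtain ⟨t, hcover⟩ := (show IsSB Y (ψ : F → ℂ) from ψ.2).2.1.isCompact.elim_nhds_subcover' W
    fun y hy => (hW y hy).isOpen.mem_nhds (hyW y hy)
  obtain ⟨θ, hθsum, hθW⟩ :=
    SB.exists_sum_eq_of_tsupport_subset t (fun j _ => hW j.1 j.2) ψ hcover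
  refine microlocallySmooth_iff.2 ⟨X ∩ ⋂ j ∈ t, A j.1 j.2, (⋂ j ∈ t, C j.1 j.2) \ {0},
    hX.inter (isOpen_biInter_finset fun j _ => hA j.1 j.2),
    ⟨hx, mem_iInter₂.2 fun j _ => hxA j.1 j.2⟩, inter_subset_left,
    (isOpen_biInter_finset fun j _ => hC j.1 j.2).sdiff isClosed_singleton,
    ⟨mem_iInter₂.2 fun j _ => hξC j.1 j.2, hξ⟩, fun h => h.2 rfl, ?_⟩
  rw [show K ψ = ∑ j ∈ t, K (θ j) by rw [← map_sum, hθsum]]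
  exact FourierVanishesOn.sum t fun j hj => (hAWC j.1 j.2 (θ j) (hθW j hj)).mono
    (inter_subset_right.trans (biInter_subset_of_mem hj))
    (sdiff_subset.trans (biInter_subset_of_mem hj))

end Gluing

theorem Fin.append_smul {M α : Type*} [SMul M α] {m n : ℕ} (c : M) (u : Fin m → α)
    (v : Fin n → α) : Fin.append (c • u) (c • v) = c • Fin.append u v := by
  funext i
  refine Fin.addCases (fun j => ?_) (fun j => ?_) i <;> simp

section Tensor

variable {p : ℕ} [Fact p.Prime] {m n : ℕ}

theorem append_mem_prodSet_iff {A : Set (Fin m → ℚ_[p])} {B : Set (Fin n → ℚ_[p])}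
    {x : Fin m → ℚ_[p]} {y : Fin n → ℚ_[p]} :
    Fin.append x y ∈ prodSet p A B ↔ x ∈ A ∧ y ∈ B := by
  have hx : Fin.append x y ∘ Fin.castAdd n = x := funext (Fin.append_left x y)
  have hy : Fin.append x y ∘ Fin.natAdd m = y := funext (Fin.append_right x y)
  change _ ∧ _ ↔ _
  rw [hx, hy]

theorem prodSet_mono {A A' : Set (Fin m → ℚ_[p])} {B B' : Set (Fin n → ℚ_[p])}
    (hA : A ⊆ A') (hB : B ⊆ B') : prodSet p A B ⊆ prodSet p A' B' :=
  fun _ hz => ⟨hA hz.1, hB hz.2⟩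

theorem exists_prodSet_subset_of_isOpen {U : Set (Fin (m + n) → ℚ_[p])} (hU : IsOpen U)
    {x : Fin m → ℚ_[p]} {y : Fin n → ℚ_[p]} (hxy : Fin.append x y ∈ U) :
    ∃ A B, IsOpen A ∧ IsOpen B ∧ x ∈ A ∧ y ∈ B ∧ prodSet p A B ⊆ U := by
  obtain ⟨A, B, hA, hB, hxA, hyB, hAB⟩ :=
    isOpen_prod_iff.1 (hU.preimage (Fin.appendHomeomorph m n).continuous) x y hxy
  refine ⟨A, B, hA, hB, hxA, hyB, fun z hz => ?_⟩
  have hz' : Fin.append (z ∘ Fin.castAdd n) (z ∘ Fin.natAdd m) ∈ U := hAB (mk_mem_prod hz.1 hz.2)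
  rwa [Function.comp_def, Function.comp_def, Fin.append_castAdd_natAdd] at hz'

variable {X : Set (Fin m → ℚ_[p])} {Y : Set (Fin n → ℚ_[p])}

theorem tsupport_tensorSB_subset (φ : SB X) (θ : SB Y) :
    tsupport (tensorSB p φ θ : (Fin (m + n) → ℚ_[p]) → ℂ) ⊆
      prodSet p (tsupport (φ : (Fin m → ℚ_[p]) → ℂ)) (tsupport (θ : (Fin n → ℚ_[p]) → ℂ)) := by
  refine closure_minimal (fun z hz => ?_) <|
    ((isClosed_tsupport _).preimage (by fun_prop)).inter
      ((isClosed_tsupport _).preimage (by fun_prop))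
  exact ⟨subset_closure (left_ne_zero_of_mul hz), subset_closure (right_ne_zero_of_mul hz)⟩

variable {Ψ : ℚ_[p] → ℂ} (hΨadd : ∀ x y : ℚ_[p], Ψ (x + y) = Ψ x * Ψ y)
  (hΨtriv : ∀ x : ℚ_[p], ‖x‖ ≤ (p : ℝ)⁻¹ → Ψ x = 1)

theorem tensorSB_charMulSB (φ : SB X) (θ : SB Y) (η : Fin m → ℚ_[p]) :
    tensorSB p (charMulSB hΨadd hΨtriv φ η) θ =
      charMulSB hΨadd hΨtriv (tensorSB p φ θ) (Fin.append η 0) := by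
  refine Subtype.ext (funext fun z => ?_)
  simp only [tensorSB, charMulSB, Fin.sum_univ_add, Fin.append_left, Fin.append_right,
    Pi.zero_apply, mul_zero, Finset.sum_const_zero, add_zero, Function.comp_apply]
  ring

end Tensor

section Kernel

variable {p : ℕ} [Fact p.Prime] {m n : ℕ} {X : Set (Fin m → ℚ_[p])} {Y : Set (Fin n → ℚ_[p])}
  {Ψ : ℚ_[p] → ℂ} {hΨadd : ∀ x y : ℚ_[p], Ψ (x + y) = Ψ x * Ψ y}
  {hΨtriv : ∀ x : ℚ_[p], ‖x‖ ≤ (p : ℝ)⁻¹ → Ψ x = 1} {Λ : Subgroup ℚ_[p]ˣ}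

theorem exists_fourierVanishesOn_kernel (u : Module.Dual ℂ (SB (prodSet p X Y)))
    (K : SB Y →ₗ[ℂ] Module.Dual ℂ (SB X)) (hK : ∀ φ ψ, u (tensorSB p φ ψ) = K ψ φ)
    {x ξ : Fin m → ℚ_[p]} {y : Fin n → ℚ_[p]}
    (h : MicrolocallySmooth p Λ hΨadd hΨtriv (prodSet p X Y) u
      (Fin.append x y) (Fin.append ξ 0)) :
    ∃ (A : Set (Fin m → ℚ_[p])) (W : Set (Fin n → ℚ_[p])) (C : Set (Fin m → ℚ_[p])),
      IsOpen A ∧ x ∈ A ∧ IsClopen W ∧ y ∈ W ∧ IsOpen C ∧ ξ ∈ C ∧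
        ∀ θ : SB Y, tsupport (θ : (Fin n → ℚ_[p]) → ℂ) ⊆ W →
          FourierVanishesOn hΨadd hΨtriv Λ (K θ) A C := by
  obtain ⟨U, V, hU, hxyU, -, hV, hξV, -, huUV⟩ := microlocallySmooth_iff.1 h
  obtain ⟨A, B, hA, hB, hxA, hyB, hABU⟩ := exists_prodSet_subset_of_isOpen hU hxyU
  obtain ⟨ε, hε, hεB⟩ := Metric.isOpen_iff.1 hB y hyB
  obtain ⟨C, D, hC, -, hξC, h0D, hCDV⟩ := exists_prodSet_subset_of_isOpen hV hξV
  refine ⟨A, Metric.ball y ε, C, hA, hxA, IsUltrametricDist.isClopen_ball y ε,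
    Metric.mem_ball_self hε, hC, hξC, fun θ hθ φ hφ => ?_⟩
  obtain ⟨N, hN⟩ := huUV (tensorSB p φ θ) <| (tsupport_tensorSB_subset φ θ).trans <|
    (prodSet_mono hφ (hθ.trans hεB)).trans hABU
  refine ⟨N, fun lam hlam hord ξ' hξ' => ?_⟩
  have hvanish := hN lam hlam hord _ (hCDV (append_mem_prodSet_iff.2 ⟨hξ', h0D⟩))
  rwa [← Fin.append_smul, smul_zero, ← tensorSB_charMulSB, hK] at hvanish

end Kernel

theorem wavefront_kernel_general (p m n : ℕ) [Fact p.Prime]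
    (X : Set (Fin m → ℚ_[p])) (Y : Set (Fin n → ℚ_[p])) (hX : IsOpen X)
    (Λ : Subgroup ℚ_[p]ˣ)
    (Ψ : ℚ_[p] → ℂ) (hΨadd : ∀ x y : ℚ_[p], Ψ (x + y) = Ψ x * Ψ y)
    (hΨtriv : ∀ x : ℚ_[p], ‖x‖ ≤ (p : ℝ)⁻¹ → Ψ x = 1)
    (u : Module.Dual ℂ (SB (prodSet p X Y)))
    (K : SB Y →ₗ[ℂ] Module.Dual ℂ (SB X))
    (hK : ∀ (φ : SB X) (ψ : SB Y), u (tensorSB p φ ψ) = K ψ φ)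
    (ψ : SB Y) (x ξ : Fin m → ℚ_[p])
    (hWF : (x, ξ) ∈ WF p Λ hΨadd hΨtriv X (K ψ)) :
    ∃ y ∈ tsupport (ψ : (Fin n → ℚ_[p]) → ℂ),
      (Fin.append x y, Fin.append ξ 0) ∈ WF p Λ hΨadd hΨtriv (prodSet p X Y) u := by
  obtain ⟨hx, hξ, hsing⟩ := hWF
  by_contra! hsmooth
  refine hsing (microlocallySmooth_of_forall_mem_tsupport hX K ψ hx hξ fun y hy => ?_)
  have hxy : Fin.append x y ∈ prodSet p X Y :=
    append_mem_prodSet_iff.2 ⟨hx, (show IsSB Y _ from ψ.2).2.2 hy⟩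
  have hξ0 : Fin.append ξ (0 : Fin n → ℚ_[p]) ≠ 0 := fun h =>
    hξ (funext fun i => by simpa using congrFun h (Fin.castAdd n i))
  exact exists_fourierVanishesOn_kernel u K hK (not_not.1 fun h => hsmooth y hy ⟨hxy, hξ0, h⟩)

/-- Wave front estimate for `p`-adic kernels: if `u` is a distribution on `X × Y` with
kernel `K`, and `ψ ∈ 𝒮(Y)`, then
`WF_Λ(Kψ) ⊆ {(x, ξ) : ∃ y ∈ supp ψ, ((x, y), (ξ, 0)) ∈ WF_Λ(u)}`. -/
theorem wavefront_kernel (p m n : ℕ) [Fact p.Prime] (hm : 0 < m) (hn : 0 < n)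
    (X : Set (Fin m → ℚ_[p])) (Y : Set (Fin n → ℚ_[p])) (hX : IsOpen X) (hY : IsOpen Y)
    (Λ : Subgroup ℚ_[p]ˣ) (hΛopen : IsOpen (Λ : Set ℚ_[p]ˣ)) (hΛfin : Λ.FiniteIndex)
    (Ψ : ℚ_[p] → ℂ) (hΨadd : ∀ x y : ℚ_[p], Ψ (x + y) = Ψ x * Ψ y)
    (hΨnontriv : ∃ x : ℚ_[p], ‖x‖ ≤ 1 ∧ Ψ x ≠ 1)
    (hΨtriv : ∀ x : ℚ_[p], ‖x‖ ≤ (p : ℝ)⁻¹ → Ψ x = 1)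
    (u : Module.Dual ℂ (SB (prodSet p X Y)))
    (K : SB Y →ₗ[ℂ] Module.Dual ℂ (SB X))
    (hK : ∀ (φ : SB X) (ψ : SB Y), u (tensorSB p φ ψ) = K ψ φ)
    (ψ : SB Y) (x ξ : Fin m → ℚ_[p])
    (hWF : (x, ξ) ∈ WF p Λ hΨadd hΨtriv X (K ψ)) :
    ∃ y ∈ tsupport (ψ : (Fin n → ℚ_[p]) → ℂ),
      (Fin.append x y, Fin.append ξ 0) ∈ WF p Λ hΨadd hΨtriv (prodSet p X Y) u :=
  wavefront_kernel_general p m n X Y hX Λ Ψ hΨadd hΨtriv u K hK ψ x ξ hWF
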